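/- Let M be a real symmetric PSD n×n matrix with eigenvalues μ₁ ≤ … ≤ μₙ. Starting from x₀ uniformly random in {-1,1}ⁿ and setting x_k = M^k x₀, for any ε with 16/n ≤ ε and k ≥ C·log(n)/ε (for a sufficiently large constant C), with probability at least 3/16 the vector x_k is nonzero and its Rayleigh quotient satisfies (1-ε)·μₙ ≤ (x_kᵀ M x_k)/(x_kᵀ x_k) ≤ μₙ. -/

import Mathlib

/-!
Expand `x₀ = ∑ cᵢ vᵢ` in the eigenbasis: the Rayleigh quotient of `M ^ k x₀` is
`∑ μᵢ ^ (2k+1) cᵢ² / ∑ μᵢ ^ (2k) cᵢ²`. Eigenvalues below `(1 - ε) μₙ` are damped by a factor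
`(1 - ε) ^ (2k) ≤ n⁻²` once `k ≥ log n / ε`, and their weights add up to at most `‖x₀‖² = n`, so
they cannot pull the quotient below `(1 - ε) μₙ` as long as `cₙ² ≥ 1/4`. For a random sign
vector, `cₙ = vₙ ⬝ᵥ x₀` is a Rademacher sum with `E cₙ² = 1` and `E cₙ⁴ ≤ 3`, so the
Paley–Zygmund inequality gives `P(cₙ² ≥ 1/4) ≥ (3/4)² / 3 = 3/16`. The constant `C = 1` works.
-/

open Matrix Finset

/-- Paley–Zygmund inequality for the uniform measure on `s`. -/
lemma Finset.sq_sub_mul_card_le_card_filter_mul_sum_sq {α : Type*} (s : Finset α) (f : α → ℝ)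
    {t : ℝ} (ht₀ : 0 ≤ t) (ht : t * #s ≤ ∑ x ∈ s, f x) :
    (∑ x ∈ s, f x - t * #s) ^ 2 ≤ #(s.filter (t ≤ f ·)) * ∑ x ∈ s, f x ^ 2 := by
  classical
  set A := s.filter (t ≤ f ·)
  have hlow : ∑ x ∈ s.filter (¬ t ≤ f ·), f x ≤ t * #s :=
    calc ∑ x ∈ s.filter (¬ t ≤ f ·), f x ≤ ∑ x ∈ s.filter (¬ t ≤ f ·), t :=
          sum_le_sum fun x hx => (not_le.1 (mem_filter.1 hx).2).le
      _ = t * #(s.filter (¬ t ≤ f ·)) := by rw [sum_const, nsmul_eq_mul, mul_comm]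
      _ ≤ t * #s := by gcongr; exact filter_subset _ _
  have hhigh : ∑ x ∈ s, f x - t * #s ≤ ∑ x ∈ A, f x := by
    rw [← sum_filter_add_sum_filter_not s (t ≤ f ·)] at ht ⊢
    linarith
  calc (∑ x ∈ s, f x - t * #s) ^ 2 ≤ (∑ x ∈ A, f x) ^ 2 := by gcongr
    _ ≤ #A * ∑ x ∈ A, f x ^ 2 := sq_sum_le_card_mul_sum_sq
    _ ≤ #A * ∑ x ∈ s, f x ^ 2 := by
        gcongr
        exact filter_subset _ _

section Rademacher

variable {ι : Type*}

def signVec (σ : ι → Bool) : ι → ℝ := fun i => if σ i then 1 else -1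

lemma signVec_eq_one_or_neg_one (σ : ι → Bool) (i : ι) : signVec σ i = 1 ∨ signVec σ i = -1 := by
  unfold signVec; split_ifs <;> simp

lemma signVec_sq (σ : ι → Bool) (i : ι) : signVec σ i ^ 2 = 1 := by
  rcases signVec_eq_one_or_neg_one σ i with h | h <;> simp [h]

def rademacherSum (a : ι → ℝ) (s : Finset ι) (σ : ι → Bool) : ℝ := ∑ i ∈ s, a i * signVec σ i

lemma signVec_dotProduct_self [Fintype ι] (σ : ι → Bool) :
    signVec σ ⬝ᵥ signVec σ = Fintype.card ι := by
  simp [dotProduct, ← sq, signVec_sq]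

lemma rademacherSum_univ [Fintype ι] (a : ι → ℝ) (σ : ι → Bool) :
    rademacherSum a univ σ = a ⬝ᵥ signVec σ := rfl

variable [DecidableEq ι]

lemma signVec_update_of_ne {σ : ι → Bool} {i j : ι} (h : i ≠ j) (b : Bool) :
    signVec (Function.update σ j b) i = signVec σ i := by
  simp only [signVec, Function.update_of_ne h]

lemma rademacherSum_update (a : ι → ℝ) {s : Finset ι} {j : ι} (hj : j ∉ s) (σ : ι → Bool)
    (b : Bool) :
    rademacherSum a s (Function.update σ j b) = rademacherSum a s σ :=
  sum_congr rfl fun i hi => by rw [signVec_update_of_ne (ne_of_mem_of_not_mem hi hj)]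

lemma rademacherSum_insert (a : ι → ℝ) {s : Finset ι} {j : ι} (hj : j ∉ s) (σ : ι → Bool) :
    rademacherSum a (insert j s) σ = a j * signVec σ j + rademacherSum a s σ :=
  sum_insert hj

variable [Fintype ι]

lemma sum_signVec_mul_eq_zero (j : ι) {f : (ι → Bool) → ℝ}
    (hf : ∀ σ b, f (Function.update σ j b) = f σ) :
    ∑ σ, signVec σ j * f σ = 0 := by
  have hinv : Function.Involutive fun σ : ι → Bool => Function.update σ j (!σ j) :=
    fun σ => by simp
  have hflip : ∀ σ, signVec (Function.update σ j (!σ j)) j * f (Function.update σ j (!σ j)) =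
      -(signVec σ j * f σ) := fun σ => by
    simp only [hf, signVec, Function.update_self]
    cases σ j <;> simp
  have := Equiv.sum_comp (hinv.toPerm _) fun σ => signVec σ j * f σ
  simp only [Function.Involutive.coe_toPerm, hflip, sum_neg_distrib] at this
  linarith

lemma sum_rademacherSum_sq (a : ι → ℝ) (s : Finset ι) :
    ∑ σ, rademacherSum a s σ ^ 2 = 2 ^ Fintype.card ι * ∑ i ∈ s, a i ^ 2 := by
  induction s using Finset.induction_on with
  | empty => simp [rademacherSum]
  | @insert j s hj ih =>
    have hexp : ∀ σ, rademacherSum a (insert j s) σ ^ 2 =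
        (a j ^ 2 + rademacherSum a s σ ^ 2) + signVec σ j * (2 * a j * rademacherSum a s σ) := by
      intro σ
      rw [rademacherSum_insert a hj]
      rcases signVec_eq_one_or_neg_one σ j with h | h <;> rw [h] <;> ring
    rw [sum_congr rfl fun σ _ => hexp σ, sum_add_distrib,
      sum_signVec_mul_eq_zero j fun σ b => by rw [rademacherSum_update a hj], sum_add_distrib, ih,
      sum_const, card_univ, Fintype.card_fun, Fintype.card_bool, sum_insert hj]
    ring

lemma sum_rademacherSum_pow_four_le (a : ι → ℝ) (s : Finset ι) :
    ∑ σ, rademacherSum a s σ ^ 4 ≤ 3 * 2 ^ Fintype.card ι * (∑ i ∈ s, a i ^ 2) ^ 2 := by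
  induction s using Finset.induction_on with
  | empty => simp [rademacherSum]
  | @insert j s hj ih =>
    have hexp : ∀ σ, rademacherSum a (insert j s) σ ^ 4 =
        (a j ^ 4 + 6 * a j ^ 2 * rademacherSum a s σ ^ 2 + rademacherSum a s σ ^ 4) +
          signVec σ j *
            (4 * a j ^ 3 * rademacherSum a s σ + 4 * a j * rademacherSum a s σ ^ 3) := by
      intro σ
      rw [rademacherSum_insert a hj]
      rcases signVec_eq_one_or_neg_one σ j with h | h <;> rw [h] <;> ring
    rw [sum_congr rfl fun σ _ => hexp σ, sum_add_distrib,
      sum_signVec_mul_eq_zero j fun σ b => by rw [rademacherSum_update a hj], sum_add_distrib,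
      sum_add_distrib, ← mul_sum, sum_rademacherSum_sq, sum_const, card_univ, Fintype.card_fun,
      Fintype.card_bool, sum_insert hj, nsmul_eq_mul]
    have hs : 0 ≤ 2 ^ Fintype.card ι * a j ^ 2 * ∑ i ∈ s, a i ^ 2 := by
      have := sum_nonneg fun i (_ : i ∈ s) => sq_nonneg (a i)
      positivity
    have ha : 0 ≤ 2 ^ Fintype.card ι * a j ^ 4 := by positivity
    push_cast
    linarith

theorem three_div_sixteen_mul_two_pow_le_card_sq_dotProduct_signVec (a : ι → ℝ)
    (ha : ∑ i, a i ^ 2 = 1) :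
    3 / 16 * 2 ^ Fintype.card ι ≤
      (#(univ.filter fun σ : ι → Bool => 1 / 4 ≤ (a ⬝ᵥ signVec σ) ^ 2) : ℝ) := by
  have hpos : (0 : ℝ) < 2 ^ Fintype.card ι := by positivity
  have hcard : (#(univ : Finset (ι → Bool)) : ℝ) = 2 ^ Fintype.card ι := by
    simp [card_univ]
  have hmean : ∑ σ, (a ⬝ᵥ signVec σ) ^ 2 = 2 ^ Fintype.card ι := by
    simpa [rademacherSum_univ, ha] using sum_rademacherSum_sq a univ
  have hfourth : ∑ σ, ((a ⬝ᵥ signVec σ) ^ 2) ^ 2 ≤ 3 * 2 ^ Fintype.card ι := by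
    simpa [rademacherSum_univ, ← pow_mul, ha] using sum_rademacherSum_pow_four_le a univ
  have hpz := univ.sq_sub_mul_card_le_card_filter_mul_sum_sq (fun σ => (a ⬝ᵥ signVec σ) ^ 2)
    (t := 1 / 4) (by norm_num) (by rw [hcard, hmean]; linarith)
  rw [hcard, hmean] at hpz
  nlinarith [hpz.trans (mul_le_mul_of_nonneg_left hfourth (Nat.cast_nonneg _))]

end Rademacher

lemma Matrix.PosSemidef.nonneg_of_mulVec_eq_smul {ι : Type*} [Fintype ι] {M : Matrix ι ι ℝ}
    (hM : M.PosSemidef) {x : ι → ℝ} {r : ℝ} (h : M *ᵥ x = r • x) (hx : x ≠ 0) : 0 ≤ r := by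
  have hquad := hM.dotProduct_mulVec_nonneg x
  rw [star_trivial, h, dotProduct_smul, smul_eq_mul] at hquad
  exact nonneg_of_mul_nonneg_left hquad (by simpa using dotProduct_star_self_pos_iff.2 hx)

section Spectral

variable {ι : Type*} [Fintype ι] [DecidableEq ι] {v : ι → ι → ℝ}

lemma sum_dotProduct_smul_eq_self (hv : ∀ i j, v i ⬝ᵥ v j = if i = j then (1 : ℝ) else 0)
    (x : ι → ℝ) : ∑ i, (v i ⬝ᵥ x) • v i = x := by
  have hV : Matrix.of v * (Matrix.of v)ᵀ = 1 := by
    ext i j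
    simpa [Matrix.mul_apply, dotProduct, Matrix.one_apply] using hv i j
  calc ∑ i, (v i ⬝ᵥ x) • v i = (Matrix.of v)ᵀ *ᵥ (Matrix.of v *ᵥ x) := by
        rw [mulVec_transpose, vecMul_eq_sum]; rfl
    _ = x := by rw [mulVec_mulVec, mul_eq_one_comm.1 hV, one_mulVec]

lemma sum_smul_dotProduct_sum_smul (hv : ∀ i j, v i ⬝ᵥ v j = if i = j then (1 : ℝ) else 0)
    (b c : ι → ℝ) : (∑ i, b i • v i) ⬝ᵥ (∑ i, c i • v i) = ∑ i, b i * c i := by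
  simp [sum_dotProduct, dotProduct_sum, hv, mul_comm]

lemma dotProduct_self_eq_sum_sq (hv : ∀ i j, v i ⬝ᵥ v j = if i = j then (1 : ℝ) else 0)
    (x : ι → ℝ) : x ⬝ᵥ x = ∑ i, (v i ⬝ᵥ x) ^ 2 := by
  conv_lhs => rw [← sum_dotProduct_smul_eq_self hv x]
  simp only [sum_smul_dotProduct_sum_smul hv, sq]

variable {M : Matrix ι ι ℝ} {μ : ι → ℝ}

lemma pow_mulVec_of_mulVec_eq_smul {x : ι → ℝ} {r : ℝ} (h : M *ᵥ x = r • x) (k : ℕ) :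
    (M ^ k) *ᵥ x = r ^ k • x := by
  induction k with
  | zero => simp
  | succ k ih => rw [pow_succ, ← mulVec_mulVec, h, mulVec_smul, ih, smul_smul, pow_succ']

lemma pow_mulVec_eq_sum (hv : ∀ i j, v i ⬝ᵥ v j = if i = j then (1 : ℝ) else 0)
    (hMv : ∀ i, M *ᵥ v i = μ i • v i) (k : ℕ) (x : ι → ℝ) :
    (M ^ k) *ᵥ x = ∑ i, (μ i ^ k * (v i ⬝ᵥ x)) • v i := by
  conv_lhs => rw [← sum_dotProduct_smul_eq_self hv x]
  simp [mulVec_sum, mulVec_smul, pow_mulVec_of_mulVec_eq_smul (hMv _), smul_smul, mul_comm]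

lemma pow_mulVec_dotProduct_pow_mulVec (hv : ∀ i j, v i ⬝ᵥ v j = if i = j then (1 : ℝ) else 0)
    (hMv : ∀ i, M *ᵥ v i = μ i • v i) (a b : ℕ) (x : ι → ℝ) :
    (M ^ a) *ᵥ x ⬝ᵥ (M ^ b) *ᵥ x = ∑ i, μ i ^ (a + b) * (v i ⬝ᵥ x) ^ 2 := by
  simp only [pow_mulVec_eq_sum hv hMv, sum_smul_dotProduct_sum_smul hv]
  exact sum_congr rfl fun i _ => by ring

end Spectral

section WeightedPowerSums

variable {ι : Type*} [Fintype ι] {μ w : ι → ℝ}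

lemma neg_pow_succ_le_pow_mul_sub {x y : ℝ} (hx : 0 ≤ x) (hy : 0 ≤ y) (p : ℕ) :
    -y ^ (p + 1) ≤ x ^ p * (x - y) := by
  rcases le_total y x with hyx | hxy
  · have := mul_nonneg (pow_nonneg hx p) (sub_nonneg.2 hyx)
    have := pow_nonneg hy (p + 1)
    linarith
  · have hpow : x ^ p ≤ y ^ p := pow_le_pow_left₀ hx hxy p
    calc -y ^ (p + 1) = y ^ p * -y := by ring
      _ ≤ x ^ p * -y := mul_le_mul_of_nonpos_right hpow (by linarith)
      _ ≤ x ^ p * (x - y) := mul_le_mul_of_nonneg_left (by linarith) (pow_nonneg hx p)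

lemma sum_pow_succ_mul_le (hμ₀ : ∀ i, 0 ≤ μ i) (hw : ∀ i, 0 ≤ w i) {m : ℝ} (hμm : ∀ i, μ i ≤ m)
    (p : ℕ) : ∑ i, μ i ^ (p + 1) * w i ≤ m * ∑ i, μ i ^ p * w i := by
  rw [mul_sum]
  refine sum_le_sum fun i _ => ?_
  rw [pow_succ', mul_assoc]
  exact mul_le_mul_of_nonneg_right (hμm i) (mul_nonneg (pow_nonneg (hμ₀ i) p) (hw i))

/-- Only the term `j` is kept on the left; every other term is at least `-y ^ (p + 1) * w i`. -/
lemma le_sum_mul_pow_mul_sub (hμ₀ : ∀ i, 0 ≤ μ i) (hw : ∀ i, 0 ≤ w i) {y : ℝ} (hy : 0 ≤ y)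
    (p : ℕ) (j : ι) :
    w j * (μ j ^ p * (μ j - y)) - y ^ (p + 1) * ∑ i, w i ≤ ∑ i, w i * (μ i ^ p * (μ i - y)) := by
  have hterm : ∀ i, 0 ≤ w i * (μ i ^ p * (μ i - y) + y ^ (p + 1)) := fun i =>
    mul_nonneg (hw i) (by linarith [neg_pow_succ_le_pow_mul_sub (hμ₀ i) hy p])
  have := single_le_sum (fun i _ => hterm i) (mem_univ j)
  have hj : 0 ≤ w j * y ^ (p + 1) := mul_nonneg (hw j) (pow_nonneg hy _)
  simp only [mul_add, sum_add_distrib, ← sum_mul] at this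
  linarith

lemma one_sub_mul_mul_sum_pow_mul_le (hμ₀ : ∀ i, 0 ≤ μ i) (hw : ∀ i, 0 ≤ w i) {ε : ℝ}
    (hε : ε ≤ 1) (p : ℕ) (j : ι)
    (hsmall : (1 - ε) ^ (p + 1) * ∑ i, w i ≤ ε * w j) :
    (1 - ε) * μ j * ∑ i, μ i ^ p * w i ≤ ∑ i, μ i ^ (p + 1) * w i := by
  have key := le_sum_mul_pow_mul_sub hμ₀ hw (mul_nonneg (sub_nonneg.2 hε) (hμ₀ j)) p j
  have hexpand : ∑ i, w i * (μ i ^ p * (μ i - (1 - ε) * μ j)) =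
      ∑ i, μ i ^ (p + 1) * w i - (1 - ε) * μ j * ∑ i, μ i ^ p * w i := by
    rw [mul_sum, ← sum_sub_distrib]
    exact sum_congr rfl fun i _ => by ring
  have hleft : w j * (μ j ^ p * (μ j - (1 - ε) * μ j)) - ((1 - ε) * μ j) ^ (p + 1) * ∑ i, w i =
      μ j ^ (p + 1) * (ε * w j - (1 - ε) ^ (p + 1) * ∑ i, w i) := by
    rw [mul_pow]; ring
  have := mul_nonneg (pow_nonneg (hμ₀ j) (p + 1)) (sub_nonneg.2 hsmall)
  linarith

end WeightedPowerSums

lemma one_sub_pow_le_inv {ε N : ℝ} (hε : ε ≤ 1) (hN : 0 < N) {q : ℕ}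
    (hq : Real.log N ≤ ε * q) : (1 - ε) ^ q ≤ N⁻¹ :=
  calc (1 - ε) ^ q ≤ Real.exp (-ε) ^ q :=
        pow_le_pow_left₀ (by linarith) (Real.one_sub_le_exp_neg ε) q
    _ = Real.exp (-Real.log N + (Real.log N - ε * q)) := by rw [← Real.exp_nat_mul]; ring_nf
    _ ≤ Real.exp (-Real.log N) := Real.exp_le_exp.2 (by linarith)
    _ = N⁻¹ := by rw [Real.exp_neg, Real.exp_log hN]

lemma one_sub_pow_two_mul_add_one_mul_le {ε N : ℝ} (hN : 0 < N) (hεN : 4 / N ≤ ε) (hε : ε ≤ 1)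
    {k : ℕ} (hk : Real.log N ≤ ε * k) : (1 - ε) ^ (2 * k + 1) * N ≤ ε / 4 := by
  have hε₀ : 0 ≤ ε := le_trans (by positivity) hεN
  have hpow : (1 - ε) ^ (2 * k + 1) ≤ (N ^ 2)⁻¹ :=
    one_sub_pow_le_inv hε (by positivity) (by rw [Real.log_pow]; push_cast; nlinarith)
  calc (1 - ε) ^ (2 * k + 1) * N ≤ (N ^ 2)⁻¹ * N := by gcongr
    _ = 4 / N / 4 := by field_simp
    _ ≤ ε / 4 := by gcongr

section RayleighQuotient

variable {ι : Type*} [Fintype ι] [DecidableEq ι] {M : Matrix ι ι ℝ} {μ : ι → ℝ}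
  {v : ι → ι → ℝ}

noncomputable def rayleighQuotient (M : Matrix ι ι ℝ) (x : ι → ℝ) : ℝ := x ⬝ᵥ M *ᵥ x / (x ⬝ᵥ x)

lemma rayleighQuotient_pow_mulVec (hv : ∀ i j, v i ⬝ᵥ v j = if i = j then (1 : ℝ) else 0)
    (hMv : ∀ i, M *ᵥ v i = μ i • v i) (k : ℕ) (x : ι → ℝ) :
    rayleighQuotient M ((M ^ k) *ᵥ x) =
      (∑ i, μ i ^ (2 * k + 1) * (v i ⬝ᵥ x) ^ 2) / ∑ i, μ i ^ (2 * k) * (v i ⬝ᵥ x) ^ 2 := by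
  rw [rayleighQuotient, mulVec_mulVec, ← pow_succ', pow_mulVec_dotProduct_pow_mulVec hv hMv,
    pow_mulVec_dotProduct_pow_mulVec hv hMv, ← add_assoc, ← two_mul]

theorem rayleighQuotient_pow_mulVec_mem (hv : ∀ i j, v i ⬝ᵥ v j = if i = j then (1 : ℝ) else 0)
    (hMv : ∀ i, M *ᵥ v i = μ i • v i) (hμ₀ : ∀ i, 0 ≤ μ i) {j : ι} (hμj : ∀ i, μ i ≤ μ j)
    (hpos : 0 < μ j) {x : ι → ℝ} (hx : v j ⬝ᵥ x ≠ 0) {ε : ℝ} {k : ℕ}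
    (hsmall : ε ≤ 1 → (1 - ε) ^ (2 * k + 1) * (x ⬝ᵥ x) ≤ ε * (v j ⬝ᵥ x) ^ 2) :
    (M ^ k) *ᵥ x ≠ 0 ∧ (1 - ε) * μ j ≤ rayleighQuotient M ((M ^ k) *ᵥ x) ∧
      rayleighQuotient M ((M ^ k) *ᵥ x) ≤ μ j := by
  rw [rayleighQuotient_pow_mulVec hv hMv]
  set w : ι → ℝ := fun i => (v i ⬝ᵥ x) ^ 2
  have hw : ∀ i, 0 ≤ w i := fun i => sq_nonneg _
  have hD : 0 < ∑ i, μ i ^ (2 * k) * w i :=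
    lt_of_lt_of_le (by positivity)
      (single_le_sum (fun i _ => mul_nonneg (pow_nonneg (hμ₀ i) _) (hw i)) (mem_univ j))
  have hN : 0 ≤ ∑ i, μ i ^ (2 * k + 1) * w i :=
    sum_nonneg fun i _ => mul_nonneg (pow_nonneg (hμ₀ i) _) (hw i)
  refine ⟨fun h0 => ?_, ?_, ?_⟩
  · have := pow_mulVec_dotProduct_pow_mulVec hv hMv k k x
    rw [h0, zero_dotProduct, ← two_mul] at this
    exact hD.ne this
  · rw [le_div_iff₀ hD]
    rcases le_or_gt ε 1 with hε | hε
    · refine one_sub_mul_mul_sum_pow_mul_le hμ₀ hw hε (2 * k) j ?_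
      simpa only [dotProduct_self_eq_sum_sq hv x] using hsmall hε
    · have : (1 - ε) * μ j ≤ 0 := mul_nonpos_of_nonpos_of_nonneg (by linarith) hpos.le
      nlinarith
  · rw [div_le_iff₀ hD]
    exact sum_pow_succ_mul_le hμ₀ hw hμj (2 * k)

end RayleighQuotient

/-- Power method guarantee: for a real symmetric PSD matrix `M` with largest
eigenvalue `μₙ > 0`, starting from a uniformly random sign vector `x₀` and taking
`k ≥ C log n / ε` iterations, with probability at least `3/16` the Rayleigh
quotient of `x_k = M^k x₀` lies in `[(1-ε)μₙ, μₙ]`. -/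
theorem stmt19 :
    ∃ C : ℝ, 0 < C ∧
      ∀ (n : ℕ) (hn : 0 < n) (M : Matrix (Fin n) (Fin n) ℝ), M.PosSemidef →
      ∀ (μ : Fin n → ℝ) (v : Fin n → Fin n → ℝ),
        Monotone μ →
        (∀ i j, v i ⬝ᵥ v j = if i = j then (1 : ℝ) else 0) →
        (∀ i, M *ᵥ v i = μ i • v i) →
        0 < μ ⟨n - 1, by omega⟩ →
        ∀ (ε : ℝ) (k : ℕ), 16 / (n : ℝ) ≤ ε → C * Real.log n / ε ≤ (k : ℝ) →
        (3 : ℝ) / 16 ≤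
          ((Finset.univ.filter fun σ : Fin n → Bool =>
              ((M ^ k) *ᵥ fun i => if σ i then (1 : ℝ) else -1) ≠ 0 ∧
              (1 - ε) * μ ⟨n - 1, by omega⟩ ≤
                (((M ^ k) *ᵥ fun i => if σ i then (1 : ℝ) else -1) ⬝ᵥ
                    M *ᵥ ((M ^ k) *ᵥ fun i => if σ i then (1 : ℝ) else -1)) /
                  (((M ^ k) *ᵥ fun i => if σ i then (1 : ℝ) else -1) ⬝ᵥ
                    ((M ^ k) *ᵥ fun i => if σ i then (1 : ℝ) else -1)) ∧
              (((M ^ k) *ᵥ fun i => if σ i then (1 : ℝ) else -1) ⬝ᵥ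
                  M *ᵥ ((M ^ k) *ᵥ fun i => if σ i then (1 : ℝ) else -1)) /
                (((M ^ k) *ᵥ fun i => if σ i then (1 : ℝ) else -1) ⬝ᵥ
                  ((M ^ k) *ᵥ fun i => if σ i then (1 : ℝ) else -1)) ≤
                μ ⟨n - 1, by omega⟩).card : ℝ) / 2 ^ n := by
  refine ⟨1, one_pos, fun n hn M hM μ v hmono hv hMv hpos ε k hε hk => ?_⟩
  set j : Fin n := ⟨n - 1, by omega⟩
  have hn' : (0 : ℝ) < n := Nat.cast_pos.2 hn
  have hε₀ : 0 < ε := lt_of_lt_of_le (by positivity) hε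
  have hμj : ∀ i, μ i ≤ μ j := fun i => hmono (Fin.le_iff_val_le_val.2 (Nat.le_sub_one_of_lt i.2))
  have hμ₀ : ∀ i, 0 ≤ μ i := fun i =>
    hM.nonneg_of_mulVec_eq_smul (hMv i) fun h0 => by simpa [h0] using hv i i
  have hsmall : ε ≤ 1 → (1 - ε) ^ (2 * k + 1) * n ≤ ε / 4 := fun hε₁ =>
    one_sub_pow_two_mul_add_one_mul_le hn' (le_trans (by gcongr; norm_num) hε) hε₁
      (by rwa [one_mul, div_le_iff₀ hε₀, mul_comm] at hk)
  have hunit : ∑ i, v j i ^ 2 = 1 := by simpa [dotProduct, sq] using hv j j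
  rw [le_div_iff₀ (by positivity)]
  have hcount := three_div_sixteen_mul_two_pow_le_card_sq_dotProduct_signVec (v j) hunit
  rw [Fintype.card_fin] at hcount
  refine hcount.trans (Nat.cast_le.2 (card_le_card fun σ hσ => ?_))
  have hc : 1 / 4 ≤ (v j ⬝ᵥ signVec σ) ^ 2 := (mem_filter.1 hσ).2
  refine mem_filter.2 ⟨mem_univ _, rayleighQuotient_pow_mulVec_mem hv hMv hμ₀ hμj hpos
    (x := signVec σ) (fun h => by norm_num [h] at hc) fun hε₁ => ?_⟩
  rw [signVec_dotProduct_self, Fintype.card_fin]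
  nlinarith [hsmall hε₁]
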